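/- arXiv:2501.00568 — 2 statements merged into one kernel-verified Lean document; each statement's English description precedes it below -/
import Mathlib

section
/- Let a ∈ R^n, P ∈ R^{n×L}, b ∈ R, ρ ≥ 0, x ∈ R^n. The constraint (a + Pz)ᵀx ≤ b holds for all z with ‖z‖_1 ≤ ρ if and only if aᵀx + ρ‖Pᵀx‖_∞ ≤ b. -/
open scoped BigOperators

/-- Dot product on `Fin n → ℝ`. -/
def dot {n : ℕ} (v w : Fin n → ℝ) : ℝ := ∑ i, v i * w i

/-- The 1-norm on `Fin n → ℝ`. -/
def norm1 {n : ℕ} (v : Fin n → ℝ) : ℝ := ∑ i, |v i|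

/-- The infinity-norm on `Fin n → ℝ`. -/
noncomputable def normInf {n : ℕ} (v : Fin n → ℝ) : ℝ := ⨆ i, |v i|

lemma dot_expand {n L : ℕ} (a : Fin n → ℝ) (P : Matrix (Fin n) (Fin L) ℝ)
    (x : Fin n → ℝ) (z : Fin L → ℝ) :
    dot (a + P.mulVec z) x = dot a x + ∑ j, z j * P.transpose.mulVec x j := by
  simp only [dot, Matrix.mulVec, dotProduct, Matrix.transpose_apply, Pi.add_apply,
    add_mul, Finset.sum_add_distrib, Finset.sum_mul, Finset.mul_sum]
  congr 1
  rw [Finset.sum_comm]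
  exact Finset.sum_congr rfl fun j _ => Finset.sum_congr rfl fun i _ => by ring

lemma le_normInf {L : ℕ} (v : Fin L → ℝ) (i : Fin L) : |v i| ≤ normInf v :=
  le_ciSup (f := fun i => |v i|) (Set.Finite.bddAbove (Set.finite_range _)) i

theorem robust_counterpart_l1 {n L : ℕ} (a : Fin n → ℝ)
    (P : Matrix (Fin n) (Fin L) ℝ) (b : ℝ) (ρ : ℝ) (hρ : 0 ≤ ρ) (x : Fin n → ℝ) :
    (∀ z : Fin L → ℝ, norm1 z ≤ ρ → dot (a + P.mulVec z) x ≤ b) ↔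
      dot a x + ρ * normInf (P.transpose.mulVec x) ≤ b := by
  set w := P.transpose.mulVec x with hw
  constructor
  · intro h
    rcases Nat.eq_zero_or_pos L with hL | hL
    · subst hL
      have h0 := h 0 (by simp [norm1, hρ])
      have hni : normInf w = 0 := by
        simp [normInf, Real.iSup_of_isEmpty]
      rw [hni, mul_zero, add_zero]
      calc dot a x = dot (a + P.mulVec 0) x := by
            rw [dot_expand]; simp
        _ ≤ b := h0
    · haveI : Nonempty (Fin L) := ⟨⟨0, hL⟩⟩
      obtain ⟨j, hj⟩ := Finite.exists_max (fun i => |w i|)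
      have hni : normInf w = |w j| :=
        le_antisymm (ciSup_le hj) (le_normInf w j)
      set z : Fin L → ℝ := fun k => if k = j then (if 0 ≤ w j then ρ else -ρ) else 0 with hz
      have hz1 : norm1 z = ρ := by
        simp only [norm1, hz]
        rw [Finset.sum_eq_single j]
        · simp only [if_pos rfl]
          split_ifs <;> simp [abs_of_nonneg hρ]
        · intro k _ hk; simp [hk]
        · simp
      have hsum : ∑ k, z k * w k = ρ * |w j| := by
        rw [Finset.sum_eq_single j]
        · simp only [hz, if_pos rfl]
          split_ifs with h'
          · rw [abs_of_nonneg h']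
          · rw [abs_of_neg (lt_of_not_ge h')]; ring
        · intro k _ hk; simp [hz, hk]
        · simp
      have hb := h z (le_of_eq hz1)
      rw [dot_expand, ← hw, hsum] at hb
      rw [hni]
      linarith
  · intro h z hz
    rw [dot_expand, ← hw]
    have hle : ∑ j, z j * w j ≤ ρ * normInf w := by
      calc ∑ j, z j * w j ≤ ∑ j, |z j| * normInf w := by
            apply Finset.sum_le_sum
            intro j _
            calc z j * w j ≤ |z j * w j| := le_abs_self _
              _ = |z j| * |w j| := abs_mul _ _
              _ ≤ |z j| * normInf w :=
                mul_le_mul_of_nonneg_left (le_normInf w j) (abs_nonneg _)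
        _ = norm1 z * normInf w := by rw [norm1, Finset.sum_mul]
        _ ≤ ρ * normInf w := by
            apply mul_le_mul_of_nonneg_right hz
            rcases Nat.eq_zero_or_pos L with hL | hL
            · subst hL; simp [normInf, Real.iSup_of_isEmpty]
            · exact le_trans (abs_nonneg (w ⟨0, hL⟩)) (le_normInf w ⟨0, hL⟩)
    linarith
end

section
/- Let Z = {z ∈ R^L : Dz ≤ d} be nonempty and bounded. Then (a + Pz)ᵀx ≤ b for all z ∈ Z if and only if there exists u ≥ 0 with Dᵀu = Pᵀx and aᵀx + dᵀu ≤ b. -/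
open scoped BigOperators

/-!
With `c = Pᵀx` and `β = b - aᵀx` the claim is LP duality for `max {cᵀz | Dz ≤ d}`; the backward
direction is weak duality. For the forward direction, homogenize: `cᵀy ≤ tβ` whenever `t ≥ 0`
and `Dy ≤ td`, for `t > 0` by applying the hypothesis to `y / t`, and for `t = 0` because a
nonempty bounded polyhedron admits no direction `y ≠ 0` with `Dy ≤ 0`. Farkas' lemma for the
homogenized system then yields the dual certificate `u`. Farkas' lemma is Hahn–Banach separation
from the cone `{Aᵀu | u ≥ 0}`, which is closed because, by the conic Carathéodory theorem, it is a
finite union of images of orthants under injective linear maps.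
-/

open Function Set

section ConicCaratheodory

variable {ι E : Type*} [Fintype ι] [AddCommGroup E]

theorem linearIndepOn_iff_fintypeLinearCombination {R : Type*} [Ring R] [Module R E]
    {v : ι → E} {s : Set ι} :
    LinearIndepOn R v s ↔
      ∀ g : ι → R, support g ⊆ s → Fintype.linearCombination R v g = 0 → g = 0 := by
  rw [linearIndepOn_iff, (Finsupp.linearEquivFunOnFinite R R ι).forall_congr_left]
  simp only [support_subset_iff', Finsupp.mem_supported']
  simp [← Finsupp.linearCombination_eq_fintype_linearCombination_apply]

/-- The ratio test of the simplex method. -/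
theorem exists_smul_le_eq_of_exists_pos {c g : ι → ℝ} (hc : 0 ≤ c) (hg : ∃ i, 0 < g i) :
    ∃ r, 0 ≤ r ∧ r • g ≤ c ∧ ∃ j, 0 < g j ∧ r * g j = c j := by
  classical
  obtain ⟨i₀, hi₀⟩ := hg
  obtain ⟨j, hj, hmin⟩ := (Finset.univ.filter (0 < g ·)).exists_min_image (fun i ↦ c i / g i)
    ⟨i₀, by simpa using hi₀⟩
  rw [Finset.mem_filter] at hj
  refine ⟨c j / g j, div_nonneg (hc j) hj.2.le, fun i ↦ ?_, j, hj.2, div_mul_cancel₀ _ hj.2.ne'⟩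
  rcases lt_or_ge 0 (g i) with hgi | hgi
  · exact (le_div_iff₀ hgi).mp (hmin i (by simpa using hgi))
  · exact (mul_nonpos_of_nonneg_of_nonpos (div_nonneg (hc j) hj.2.le) hgi).trans (hc i)

variable [Module ℝ E] (v : ι → E)

theorem exists_nonneg_support_ssubset_of_not_linearIndepOn {c : ι → ℝ} (hc : 0 ≤ c)
    (hdep : ¬LinearIndepOn ℝ v (support c)) :
    ∃ c', 0 ≤ c' ∧ Fintype.linearCombination ℝ v c' = Fintype.linearCombination ℝ v c ∧
      support c' ⊂ support c := by
  obtain ⟨g, hgc, hg0, hg⟩ : ∃ g : ι → ℝ, support g ⊆ support c ∧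
      Fintype.linearCombination ℝ v g = 0 ∧ ∃ i, 0 < g i := by
    simp only [linearIndepOn_iff_fintypeLinearCombination, not_forall] at hdep
    obtain ⟨g, hgc, hg0, hg⟩ := hdep
    obtain ⟨i, hi⟩ := ne_iff.mp hg
    rcases hi.lt_or_gt with hneg | hpos
    · exact ⟨-g, by simpa using hgc, by simp [hg0], i, by simpa using hneg⟩
    · exact ⟨g, hgc, hg0, i, hpos⟩
  obtain ⟨r, -, hrc, j, hj, hrj⟩ := exists_smul_le_eq_of_exists_pos hc hg
  refine ⟨c - r • g, sub_nonneg.mpr hrc, by simp [hg0], ?_, fun hsub ↦ ?_⟩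
  · exact (support_sub _ _).trans
      (union_subset subset_rfl ((support_smul_subset_right _ _).trans hgc))
  · have hcj : c j ≠ 0 := hgc hj.ne'
    exact hsub hcj (by simp [hrj])

theorem exists_nonneg_linearIndepOn_support (c : ι → ℝ) (hc : 0 ≤ c) :
    ∃ c', 0 ≤ c' ∧ Fintype.linearCombination ℝ v c' = Fintype.linearCombination ℝ v c ∧
      LinearIndepOn ℝ v (support c') := by
  induction hN : (support c).ncard using Nat.strong_induction_on generalizing c with
  | _ N ih =>
    by_cases hli : LinearIndepOn ℝ v (support c)
    · exact ⟨c, hc, rfl, hli⟩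
    obtain ⟨c', hc', hc'c, hsub⟩ := exists_nonneg_support_ssubset_of_not_linearIndepOn v hc hli
    obtain ⟨c'', hc'', hc''c', hli''⟩ := ih _ (hN ▸ ncard_lt_ncard hsub) c' hc' rfl
    exact ⟨c'', hc'', hc''c'.trans hc'c, hli''⟩

end ConicCaratheodory

section FiniteCone

variable {ι E : Type*} [Fintype ι] [AddCommGroup E] [Module ℝ E] [TopologicalSpace E]
  [IsTopologicalAddGroup E] [ContinuousSMul ℝ E] (v : ι → E)

theorem isClosed_image_linearCombination_of_linearIndepOn [T2Space E] {t : Set ι}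
    (ht : LinearIndepOn ℝ v t) :
    IsClosed (Fintype.linearCombination ℝ v '' {c | 0 ≤ c ∧ support c ⊆ t}) := by
  set W : Submodule ℝ (ι → ℝ) := Submodule.pi tᶜ fun _ ↦ ⊥
  have hW : ∀ c, c ∈ W ↔ support c ⊆ t := by
    simp only [W, Submodule.mem_pi, Submodule.mem_bot, mem_compl_iff, support_subset_iff',
      implies_true]
  have hker : LinearMap.ker ((Fintype.linearCombination ℝ v).domRestrict W) = ⊥ := by
    rw [LinearMap.ker_eq_bot']
    rintro ⟨c, hcW⟩ hc0
    exact Subtype.ext (linearIndepOn_iff_fintypeLinearCombination.mp ht c ((hW c).mp hcW) hc0)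
  convert (LinearMap.isClosedEmbedding_of_injective hker).isClosedMap _
    (isClosed_Ici.preimage continuous_subtype_val : IsClosed {w : W | 0 ≤ (w : ι → ℝ)}) using 1
  ext x
  constructor
  · rintro ⟨c, ⟨hc, hct⟩, rfl⟩
    exact ⟨⟨c, (hW c).mpr hct⟩, hc, rfl⟩
  · rintro ⟨⟨c, hcW⟩, hc, rfl⟩
    exact ⟨c, ⟨hc, (hW c).mp hcW⟩, rfl⟩

theorem isClosed_image_linearCombination_Ici [T2Space E] :
    IsClosed (Fintype.linearCombination ℝ v '' Ici 0) := by
  have hunion : Fintype.linearCombination ℝ v '' Ici 0 =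
      ⋃ t ∈ {t : Set ι | LinearIndepOn ℝ v t},
        Fintype.linearCombination ℝ v '' {c | 0 ≤ c ∧ support c ⊆ t} := by
    refine Subset.antisymm ?_ (iUnion₂_subset fun t _ ↦ image_mono fun c hc ↦ hc.1)
    rintro _ ⟨c, hc, rfl⟩
    obtain ⟨c', hc', heq, hli⟩ := exists_nonneg_linearIndepOn_support v c hc
    exact mem_biUnion hli ⟨c', ⟨hc', subset_rfl⟩, heq⟩
  rw [hunion]
  exact (toFinite _).isClosed_biUnion fun t ht ↦
    isClosed_image_linearCombination_of_linearIndepOn v ht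

theorem mem_image_linearCombination_Ici_iff [T2Space E] [LocallyConvexSpace ℝ E] {x : E} :
    x ∈ Fintype.linearCombination ℝ v '' Ici 0 ↔
      ∀ φ : StrongDual ℝ E, (∀ i, 0 ≤ φ (v i)) → 0 ≤ φ x := by
  constructor
  · rintro ⟨c, hc, rfl⟩ φ hφ
    simpa [Fintype.linearCombination_apply] using
      Finset.sum_nonneg fun i _ ↦ mul_nonneg (hc i) (hφ i)
  · intro h
    classical
    by_contra hx
    let C : ProperCone ℝ E :=
      ⟨(PointedCone.positive ℝ (ι → ℝ)).map (Fintype.linearCombination ℝ v),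
        by simpa using isClosed_image_linearCombination_Ici v⟩
    obtain ⟨φ, hφC, hφx⟩ := C.hyperplane_separation_point (x₀ := x) (by simpa [C] using hx)
    refine hφx.not_ge (h φ fun i ↦ hφC _ ?_)
    simpa [C] using ⟨Pi.single i 1, Pi.single_nonneg.mpr zero_le_one, by simp⟩

end FiniteCone

namespace Matrix

section Farkas

variable {ι κ : Type*} [Fintype ι] [Fintype κ]

theorem exists_nonneg_transpose_mulVec_eq_iff (A : Matrix ι κ ℝ) (w : κ → ℝ) :
    (∃ u, 0 ≤ u ∧ Aᵀ *ᵥ u = w) ↔ ∀ y, 0 ≤ A *ᵥ y → 0 ≤ w ⬝ᵥ y := by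
  classical
  constructor
  · rintro ⟨u, hu, rfl⟩ y hy
    rw [mulVec_transpose, ← dotProduct_mulVec]
    exact dotProduct_nonneg_of_nonneg hu hy
  · intro h
    have hcone : ∀ u, Aᵀ *ᵥ u = Fintype.linearCombination ℝ (fun i ↦ A i) u := fun u ↦ by
      rw [mulVec_transpose, vecMul_eq_sum, Fintype.linearCombination_apply]
    simp_rw [hcone]
    refine (mem_image_linearCombination_Ici_iff _).mpr fun φ hφ ↦ ?_
    set y : κ → ℝ := fun k ↦ φ fun j ↦ if k = j then 1 else 0
    have hφy : ∀ z, φ z = z ⬝ᵥ y := fun z ↦ by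
      simpa [dotProduct, y] using LinearMap.pi_apply_eq_sum_univ (φ : (κ → ℝ) →ₗ[ℝ] ℝ) z
    rw [hφy]
    exact h y fun i ↦ (hφy (A i)).symm.trans_ge (hφ i)

theorem exists_nonneg_transpose_mulVec_eq_of_homogenized (D : Matrix ι κ ℝ) (d : ι → ℝ)
    (c : κ → ℝ) (β : ℝ) (h : ∀ y (t : ℝ), 0 ≤ t → D *ᵥ y ≤ t • d → c ⬝ᵥ y ≤ t * β) :
    ∃ u, 0 ≤ u ∧ Dᵀ *ᵥ u = c ∧ d ⬝ᵥ u ≤ β := by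
  -- `A (y, t) ≥ 0` says `Dy ≤ td` and `t ≥ 0`; in `Aᵀ (u, s) = (-c, β)` the entry `s ≥ 0` is
  -- the slack of `dᵀu ≤ β`.
  set A : Matrix (ι ⊕ Unit) (κ ⊕ Unit) ℝ := fromBlocks (-D) (replicateCol Unit d) 0 1
  have hA : ∀ y, A *ᵥ y = Sum.elim (y (.inr ()) • d - D *ᵥ (y ∘ .inl)) fun _ ↦ y (.inr ()) := by
    intro y
    rw [fromBlocks_mulVec]
    congr 1
    · ext i; simp [neg_mulVec, mulVec, replicateCol]; ring
    · ext; simp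
  have hAt : ∀ u, Aᵀ *ᵥ u =
      Sum.elim (-(Dᵀ *ᵥ (u ∘ .inl))) fun _ ↦ d ⬝ᵥ (u ∘ .inl) + u (.inr ()) := by
    intro u
    rw [fromBlocks_transpose, fromBlocks_mulVec]
    congr 1
    · ext i; simp [neg_mulVec]
    · ext; simp [mulVec, dotProduct, replicateCol]
  have hAy : ∀ y, 0 ≤ A *ᵥ y → 0 ≤ Sum.elim (-c) (fun _ ↦ β) ⬝ᵥ y := by
    intro y hy
    rw [hA, Sum.nonneg_elim_iff, sub_nonneg] at hy
    have hcy := h (y ∘ .inl) (y (.inr ())) (hy.2 ()) hy.1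
    simp only [dotProduct, Fintype.sum_sum_type, Function.comp_apply] at hcy ⊢
    simp only [Sum.elim_inl, Sum.elim_inr, Pi.neg_apply, neg_mul, Finset.sum_neg_distrib,
      Finset.univ_unique, Finset.sum_singleton]
    linarith
  obtain ⟨u, hu, hAu⟩ := (exists_nonneg_transpose_mulVec_eq_iff A _).mpr hAy
  rw [hAt, Sum.elim_eq_iff, neg_inj] at hAu
  have hβ : d ⬝ᵥ (u ∘ .inl) + u (.inr ()) = β := congrFun hAu.2 ()
  have hslack : 0 ≤ u (.inr ()) := hu _
  exact ⟨u ∘ .inl, fun i ↦ hu _, hAu.1, by linarith⟩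

end Farkas

theorem eq_zero_of_mulVec_nonpos {ι κ : Type*} [Fintype κ] {D : Matrix ι κ ℝ} {d : ι → ℝ}
    (hne : {z | D *ᵥ z ≤ d}.Nonempty)
    (hbdd : Bornology.IsBounded {z | D *ᵥ z ≤ d}) {y : κ → ℝ} (hy : D *ᵥ y ≤ 0) : y = 0 := by
  obtain ⟨z₀, hz₀⟩ := hne
  obtain ⟨R, hR⟩ := isBounded_iff_forall_norm_le.mp hbdd
  have hray : ∀ k : ℕ, (k : ℝ) * ‖y‖ ≤ 2 * R := fun k ↦ by
    have hmem : D *ᵥ (z₀ + (k : ℝ) • y) ≤ d := by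
      simpa [mulVec_add, mulVec_smul] using
        add_le_of_le_of_nonpos hz₀ (smul_nonpos_of_nonneg_of_nonpos k.cast_nonneg hy)
    calc (k : ℝ) * ‖y‖ = ‖(z₀ + (k : ℝ) • y) - z₀‖ := by simp [norm_smul]
      _ ≤ ‖z₀ + (k : ℝ) • y‖ + ‖z₀‖ := norm_sub_le _ _
      _ ≤ 2 * R := by linarith [hR _ hmem, hR _ hz₀]
  by_contra hy0
  obtain ⟨k, hk⟩ := exists_nat_gt (2 * R / ‖y‖)
  rw [div_lt_iff₀ (norm_pos_iff.mpr hy0)] at hk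
  linarith [hray k]

theorem forall_dotProduct_le_iff_exists_dual {ι κ : Type*} [Fintype ι] [Fintype κ]
    {D : Matrix ι κ ℝ} {d : ι → ℝ} (hne : {z | D *ᵥ z ≤ d}.Nonempty)
    (hbdd : Bornology.IsBounded {z | D *ᵥ z ≤ d}) (c : κ → ℝ) (β : ℝ) :
    (∀ z, D *ᵥ z ≤ d → c ⬝ᵥ z ≤ β) ↔ ∃ u, 0 ≤ u ∧ Dᵀ *ᵥ u = c ∧ d ⬝ᵥ u ≤ β := by
  constructor
  · intro h
    refine exists_nonneg_transpose_mulVec_eq_of_homogenized D d c β fun y t ht hy ↦ ?_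
    rcases ht.eq_or_lt with rfl | ht
    · rw [eq_zero_of_mulVec_nonpos hne hbdd (y := y) (by simpa using hy)]
      simp
    · have hz : D *ᵥ (t⁻¹ • y) ≤ d := by
        simpa [mulVec_smul, smul_smul, ht.ne'] using
          smul_le_smul_of_nonneg_left hy (inv_nonneg.mpr ht.le)
      have := h _ hz
      rwa [dotProduct_smul, smul_eq_mul, inv_mul_le_iff₀ ht] at this
  · rintro ⟨u, hu, rfl, hdu⟩ z hz
    calc Dᵀ *ᵥ u ⬝ᵥ z = u ⬝ᵥ D *ᵥ z := by rw [mulVec_transpose, dotProduct_mulVec]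
      _ ≤ u ⬝ᵥ d := dotProduct_le_dotProduct_of_nonneg_left hz hu
      _ = d ⬝ᵥ u := dotProduct_comm _ _
      _ ≤ β := hdu

end Matrix

theorem polyhedral_robust_counterpart {n L m : ℕ}
    (D : Matrix (Fin m) (Fin L) ℝ) (d : Fin m → ℝ)
    (hne : {z : Fin L → ℝ | ∀ j, D.mulVec z j ≤ d j}.Nonempty)
    (hbdd : Bornology.IsBounded {z : Fin L → ℝ | ∀ j, D.mulVec z j ≤ d j})
    (a x : Fin n → ℝ) (P : Matrix (Fin n) (Fin L) ℝ) (b : ℝ) :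
    (∀ z : Fin L → ℝ, (∀ j, D.mulVec z j ≤ d j) → dot (a + P.mulVec z) x ≤ b) ↔
      ∃ u : Fin m → ℝ, (∀ j, 0 ≤ u j) ∧
        D.transpose.mulVec u = P.transpose.mulVec x ∧ dot a x + dot d u ≤ b := by
  have hobj : ∀ z, dot (a + P.mulVec z) x = dot a x + P.transpose.mulVec x ⬝ᵥ z := fun z ↦ by
    rw [dot, dot, ← dotProduct, ← dotProduct, add_dotProduct, Matrix.mulVec_transpose,
      ← Matrix.dotProduct_mulVec, dotProduct_comm (P.mulVec z)]
  simp_rw [hobj, ← le_sub_iff_add_le']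
  exact Matrix.forall_dotProduct_le_iff_exists_dual hne hbdd _ _
end
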